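/- arXiv:2212.06093 — 2 statements merged into one kernel-verified Lean document; each statement's English description precedes it below -/
import Mathlib

section
/- Assume Ω_{nℓ} ⊆ ℝ^N is open, bounded and δ-connected and that J satisfies (J1) and (J2). Let h : ℝ^N → ℝ be a continuous function with h ≥ 0 on Ω_{nℓ}, and suppose there is a measurable set B ⊆ Ω_{nℓ} of positive Lebesgue measure on which h > 0. Then there exists a constant C > 0, depending only on Ω_{nℓ}, B, h and J, such that for every v ∈ L²(Ω_{nℓ}): ‖v‖²_{L²(Ω_{nℓ})} ≤ C ( ∫_{Ω_{nℓ}} h(x) v(x)² dx + ∫_{Ω_{nℓ}} ∫_{Ω_{nℓ}} J(x−y) (v(y) − v(x))² dy dx ). -/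
/-!
Cover `Ω` by finitely many balls of radius `δ/4` centred in `Ω`. When two centres are within
`3δ/2`, all pairs of points of the two balls are within `2δ`, where `J ≥ c`; integrating
`v(x)² ≤ 2 (v(y) - v(x))² + 2 v(y)²` over such a pair bounds `∫ v²` on one ball by the nonlocal
energy plus a multiple of `∫ v²` on the other. Some ball meets `B ∩ {h ≥ ε}` in positive measure,
and there `∫ v² ≤ ε⁻¹ ∫ h v²`. Since `Ω` is `δ`-connected, the graph joining balls with nearby
centres is connected, so the bound propagates to every ball of the cover, hence to `Ω`.
-/

open MeasureTheory Metric

/-- An open set `D ⊆ ℝ^N` is `δ`-connected if it cannot be written as a disjoint union of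
two nonempty (relatively) open sets that are at distance greater than or equal to `δ`. -/
def DeltaConnected {N : ℕ} (δ : ℝ) (D : Set (EuclideanSpace ℝ (Fin N))) : Prop :=
  ¬ ∃ A B : Set (EuclideanSpace ℝ (Fin N)),
      IsOpen A ∧ IsOpen B ∧ A.Nonempty ∧ B.Nonempty ∧
      A ∪ B = D ∧ A ∩ B = ∅ ∧ ∀ x ∈ A, ∀ y ∈ B, δ ≤ dist x y

open Set Function
open scoped ENNReal NNReal

theorem ofReal_sq_le_two_mul_ofReal_sq_sub_add (a b : ℝ) :
    ENNReal.ofReal (a ^ 2) ≤ 2 * ENNReal.ofReal ((b - a) ^ 2) + 2 * ENNReal.ofReal (b ^ 2) :=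
  calc ENNReal.ofReal (a ^ 2) ≤ ENNReal.ofReal (2 * (b - a) ^ 2 + 2 * b ^ 2) :=
        ENNReal.ofReal_le_ofReal (by nlinarith [sq_nonneg (a - 2 * b)])
    _ = 2 * ENNReal.ofReal ((b - a) ^ 2) + 2 * ENNReal.ofReal (b ^ 2) := by
        rw [ENNReal.ofReal_add (by positivity) (by positivity), ENNReal.ofReal_mul zero_le_two,
          ENNReal.ofReal_mul zero_le_two, ENNReal.ofReal_ofNat]

section NonlocalEnergy

variable {X : Type*} [MeasurableSpace X] {μ : Measure X}

theorem exists_pos_measure_inter_setOf_le {B : Set X} {h : X → ℝ} (hB : μ B ≠ 0)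
    (hh : ∀ x ∈ B, 0 < h x) : ∃ ε > 0, μ (B ∩ {x | ε ≤ h x}) ≠ 0 := by
  by_contra! h₀
  refine hB (measure_mono_null (fun x hx => ?_)
    (measure_iUnion_null fun n : ℕ => h₀ (1 / (n + 1)) Nat.one_div_pos_of_nat))
  obtain ⟨n, hn⟩ := exists_nat_one_div_lt (hh x hx)
  exact mem_iUnion.2 ⟨n, hx, hn.le⟩

noncomputable def nonlocalEnergy (μ : Measure X) (k : X → X → ℝ≥0∞) (v : X → ℝ) : ℝ≥0∞ :=
  ∫⁻ x, ∫⁻ y, k x y * ENNReal.ofReal ((v y - v x) ^ 2) ∂μ ∂μ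

/-- Integrating `c v(x)² ≤ 2 k(x,y) (v y - v x)² + 2 c v(y)²` over `x ∈ S`, `y ∈ T`. -/
theorem mul_measure_mul_setLIntegral_sq_le {k : X → X → ℝ≥0∞} {S T : Set X}
    (hS : MeasurableSet S) (hT : MeasurableSet T) {c : ℝ≥0∞}
    (hk : ∀ x ∈ S, ∀ y ∈ T, c ≤ k x y) {v : X → ℝ} (hv : AEMeasurable v μ) :
    c * μ T * ∫⁻ x in S, ENNReal.ofReal (v x ^ 2) ∂μ ≤
      2 * nonlocalEnergy μ k v + 2 * c * μ S * ∫⁻ y in T, ENNReal.ofReal (v y ^ 2) ∂μ := by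
  have hsq : AEMeasurable (fun x => ENNReal.ofReal (v x ^ 2)) μ := (hv.pow_const 2).ennreal_ofReal
  set E := fun x => ∫⁻ y, k x y * ENNReal.ofReal ((v y - v x) ^ 2) ∂μ
  set IT := ∫⁻ y in T, ENNReal.ofReal (v y ^ 2) ∂μ
  have hpoint : ∀ x ∈ S, c * μ T * ENNReal.ofReal (v x ^ 2) ≤ 2 * E x + 2 * c * IT := by
    intro x hx
    calc c * μ T * ENNReal.ofReal (v x ^ 2) = ∫⁻ _ in T, c * ENNReal.ofReal (v x ^ 2) ∂μ := by
          rw [setLIntegral_const]; ring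
      _ ≤ ∫⁻ y in T, (2 * (k x y * ENNReal.ofReal ((v y - v x) ^ 2)) +
            2 * c * ENNReal.ofReal (v y ^ 2)) ∂μ := by
          refine setLIntegral_mono' hT fun y hy => ?_
          calc c * ENNReal.ofReal (v x ^ 2)
              ≤ c * (2 * ENNReal.ofReal ((v y - v x) ^ 2) + 2 * ENNReal.ofReal (v y ^ 2)) := by
                gcongr; exact ofReal_sq_le_two_mul_ofReal_sq_sub_add _ _
            _ = 2 * (c * ENNReal.ofReal ((v y - v x) ^ 2)) + 2 * c * ENNReal.ofReal (v y ^ 2) := by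
                ring
            _ ≤ 2 * (k x y * ENNReal.ofReal ((v y - v x) ^ 2)) +
                2 * c * ENNReal.ofReal (v y ^ 2) := by
                gcongr; exact hk x hx y hy
      _ = 2 * ∫⁻ y in T, k x y * ENNReal.ofReal ((v y - v x) ^ 2) ∂μ + 2 * c * IT := by
          rw [lintegral_add_right' _ (hsq.restrict.const_mul _),
            lintegral_const_mul' _ _ (by norm_num), lintegral_const_mul'' _ hsq.restrict]
      _ ≤ 2 * E x + 2 * c * IT := by gcongr; exact setLIntegral_le_lintegral _ _
  calc c * μ T * ∫⁻ x in S, ENNReal.ofReal (v x ^ 2) ∂μ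
      = ∫⁻ x in S, c * μ T * ENNReal.ofReal (v x ^ 2) ∂μ :=
        (lintegral_const_mul'' _ hsq.restrict).symm
    _ ≤ ∫⁻ x in S, (2 * E x + 2 * c * IT) ∂μ := setLIntegral_mono' hS hpoint
    _ = 2 * ∫⁻ x in S, E x ∂μ + 2 * c * IT * μ S := by
        rw [lintegral_add_right _ measurable_const, lintegral_const_mul' _ _ (by norm_num),
          setLIntegral_const]
    _ ≤ 2 * nonlocalEnergy μ k v + 2 * c * μ S * IT := by
        rw [mul_right_comm _ IT]; gcongr; exact setLIntegral_le_lintegral _ _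

theorem integrable_kernel_mul_sq_sub [IsFiniteMeasure μ] {k : X → X → ℝ}
    (hk : AEStronglyMeasurable (uncurry k) (μ.prod μ)) (hk₀ : ∀ x y, 0 ≤ k x y) {M : ℝ}
    (hkM : ∀ x y, k x y ≤ M) {v : X → ℝ} (hv : MemLp v 2 μ) :
    Integrable (fun p : X × X => k p.1 p.2 * (v p.2 - v p.1) ^ 2) (μ.prod μ) := by
  refine Integrable.mono'
    (((hv.integrable_sq.comp_snd μ).add (hv.integrable_sq.comp_fst μ)).const_mul (2 * |M|))
    (hk.mul ((hv.1.comp_snd.sub hv.1.comp_fst).pow 2)) (ae_of_all _ fun p => ?_)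
  rw [Real.norm_of_nonneg (mul_nonneg (hk₀ _ _) (sq_nonneg _))]
  calc k p.1 p.2 * (v p.2 - v p.1) ^ 2 ≤ |M| * (2 * v p.2 ^ 2 + 2 * v p.1 ^ 2) :=
        mul_le_mul ((hkM _ _).trans (le_abs_self M)) (by nlinarith [sq_nonneg (v p.2 + v p.1)])
          (sq_nonneg _) (abs_nonneg M)
    _ = 2 * |M| * (v p.2 ^ 2 + v p.1 ^ 2) := by ring

theorem ofReal_integral_integral_eq_nonlocalEnergy [IsFiniteMeasure μ] {k : X → X → ℝ}
    (hk : AEStronglyMeasurable (uncurry k) (μ.prod μ)) (hk₀ : ∀ x y, 0 ≤ k x y) {M : ℝ}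
    (hkM : ∀ x y, k x y ≤ M) {v : X → ℝ} (hv : MemLp v 2 μ) :
    ENNReal.ofReal (∫ x, ∫ y, k x y * (v y - v x) ^ 2 ∂μ ∂μ) =
      nonlocalEnergy μ (fun x y => ENNReal.ofReal (k x y)) v := by
  have hF := integrable_kernel_mul_sq_sub hk hk₀ hkM hv
  rw [integral_integral hF, ofReal_integral_eq_lintegral_ofReal hF
    (ae_of_all _ fun p => mul_nonneg (hk₀ _ _) (sq_nonneg _)),
    lintegral_prod _ hF.aemeasurable.ennreal_ofReal]
  simp_rw [ENNReal.ofReal_mul (hk₀ _ _)]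
  rfl

def SqIntegralControlledBy (μ : Measure X) (Φ : (X → ℝ) → ℝ≥0∞) (S : Set X) : Prop :=
  ∃ C : ℝ≥0, ∀ v : X → ℝ, AEMeasurable v μ →
    ∫⁻ x in S, ENNReal.ofReal (v x ^ 2) ∂μ ≤ C * Φ v

namespace SqIntegralControlledBy

variable {Φ : (X → ℝ) → ℝ≥0∞} {S T : Set X}

theorem mono (hST : S ≤ᵐ[μ] T) (hT : SqIntegralControlledBy μ Φ T) :
    SqIntegralControlledBy μ Φ S :=
  let ⟨C, hC⟩ := hT
  ⟨C, fun v hv => (lintegral_mono_set' hST).trans (hC v hv)⟩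

theorem union (hS : SqIntegralControlledBy μ Φ S) (hT : SqIntegralControlledBy μ Φ T) :
    SqIntegralControlledBy μ Φ (S ∪ T) := by
  obtain ⟨C₁, h₁⟩ := hS
  obtain ⟨C₂, h₂⟩ := hT
  refine ⟨C₁ + C₂, fun v hv => (lintegral_union_le _ _ _).trans ?_⟩
  rw [ENNReal.coe_add, add_mul]
  exact add_le_add (h₁ v hv) (h₂ v hv)

theorem biUnion {ι : Type*} {t : Set ι} (ht : t.Finite) {A : ι → Set X}
    (hA : ∀ i ∈ t, SqIntegralControlledBy μ Φ (A i)) :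
    SqIntegralControlledBy μ Φ (⋃ i ∈ t, A i) := by
  induction t, ht using Set.Finite.induction_on with
  | empty => exact ⟨0, fun v _ => by simp⟩
  | insert _ _ ih =>
    rw [biUnion_insert]
    exact (hA _ (mem_insert _ _)).union (ih fun i hi => hA i (mem_insert_of_mem _ hi))

theorem of_le_weight {h : X → ℝ} (hH : ∀ v, ∫⁻ x, ENNReal.ofReal (h x * v x ^ 2) ∂μ ≤ Φ v)
    (hT : MeasurableSet T) {ε : ℝ} (hε : 0 < ε) (hεh : ∀ x ∈ T, ε ≤ h x) :
    SqIntegralControlledBy μ Φ T := by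
  refine ⟨ε⁻¹.toNNReal, fun v _ => ?_⟩
  calc ∫⁻ x in T, ENNReal.ofReal (v x ^ 2) ∂μ
      ≤ ∫⁻ x in T, ENNReal.ofReal ε⁻¹ * ENNReal.ofReal (h x * v x ^ 2) ∂μ := by
        refine setLIntegral_mono' hT fun x hx => ?_
        rw [← ENNReal.ofReal_mul (by positivity)]
        refine ENNReal.ofReal_le_ofReal ?_
        calc v x ^ 2 = ε⁻¹ * (ε * v x ^ 2) := by field_simp
          _ ≤ ε⁻¹ * (h x * v x ^ 2) := by gcongr; exact hεh x hx
    _ = ENNReal.ofReal ε⁻¹ * ∫⁻ x in T, ENNReal.ofReal (h x * v x ^ 2) ∂μ :=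
        lintegral_const_mul' _ _ ENNReal.ofReal_ne_top
    _ ≤ ENNReal.ofReal ε⁻¹ * Φ v := by gcongr; exact (setLIntegral_le_lintegral _ _).trans (hH v)

theorem of_kernel_ge [IsFiniteMeasure μ] {k : X → X → ℝ≥0∞}
    (hE : ∀ v, nonlocalEnergy μ k v ≤ Φ v) (hS : MeasurableSet S) (hT : MeasurableSet T)
    (hT₀ : μ T ≠ 0) {c : ℝ≥0} (hc : c ≠ 0) (hk : ∀ x ∈ S, ∀ y ∈ T, c ≤ k x y)
    (hTΦ : SqIntegralControlledBy μ Φ T) : SqIntegralControlledBy μ Φ S := by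
  obtain ⟨C, hC⟩ := hTΦ
  have hcT₀ : (c : ℝ≥0∞) * μ T ≠ 0 := mul_ne_zero (by exact_mod_cast hc) hT₀
  have hcT : (c : ℝ≥0∞) * μ T ≠ ∞ := by finiteness
  set D : ℝ≥0∞ := (c * μ T)⁻¹ * (2 + 2 * c * μ S * C)
  have hD : D ≠ ∞ := ENNReal.mul_ne_top (ENNReal.inv_ne_top.2 hcT₀) (by finiteness)
  refine ⟨D.toNNReal, fun v hv => ?_⟩
  rw [ENNReal.coe_toNNReal hD, mul_assoc, ← ENNReal.mul_le_iff_le_inv hcT₀ hcT]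
  calc c * μ T * ∫⁻ x in S, ENNReal.ofReal (v x ^ 2) ∂μ
      ≤ 2 * nonlocalEnergy μ k v + 2 * c * μ S * ∫⁻ y in T, ENNReal.ofReal (v y ^ 2) ∂μ :=
        mul_measure_mul_setLIntegral_sq_le hS hT hk hv
    _ ≤ 2 * Φ v + 2 * c * μ S * (C * Φ v) := by gcongr; exacts [hE v, hC v hv]
    _ = (2 + 2 * c * μ S * C) * Φ v := by ring

theorem exists_integral_sq_le [IsFiniteMeasure μ] {k : X → X → ℝ}
    (hk : AEStronglyMeasurable (uncurry k) (μ.prod μ)) (hk₀ : ∀ x y, 0 ≤ k x y) {M : ℝ}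
    (hkM : ∀ x y, k x y ≤ M) {w : X → ℝ} (hw : AEStronglyMeasurable w μ)
    (hw₀ : ∀ᵐ x ∂μ, 0 ≤ w x) {L : ℝ} (hwL : ∀ᵐ x ∂μ, ‖w x‖ ≤ L)
    (hΦ : SqIntegralControlledBy μ (fun v => nonlocalEnergy μ (fun x y => ENNReal.ofReal (k x y)) v
      + ∫⁻ x, ENNReal.ofReal (w x * v x ^ 2) ∂μ) univ) :
    ∃ C > (0 : ℝ), ∀ v : X → ℝ, MemLp v 2 μ →
      ∫ x, v x ^ 2 ∂μ ≤
        C * ((∫ x, w x * v x ^ 2 ∂μ) + ∫ x, ∫ y, k x y * (v y - v x) ^ 2 ∂μ ∂μ) := by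
  obtain ⟨C, hC⟩ := hΦ
  refine ⟨C + 1, by positivity, fun v hv => ?_⟩
  have hwv₀ : ∀ᵐ x ∂μ, 0 ≤ w x * v x ^ 2 := hw₀.mono fun x hx => mul_nonneg hx (sq_nonneg _)
  have hwv : Integrable (fun x => w x * v x ^ 2) μ := hv.integrable_sq.bdd_mul hw hwL
  have hH : 0 ≤ ∫ x, w x * v x ^ 2 ∂μ := integral_nonneg_of_ae hwv₀
  have hE : 0 ≤ ∫ x, ∫ y, k x y * (v y - v x) ^ 2 ∂μ ∂μ :=
    integral_nonneg fun x => integral_nonneg fun y => mul_nonneg (hk₀ x y) (sq_nonneg _)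
  have hbound : ∫ x, v x ^ 2 ∂μ ≤
      C * ((∫ x, w x * v x ^ 2 ∂μ) + ∫ x, ∫ y, k x y * (v y - v x) ^ 2 ∂μ ∂μ) := by
    rw [← ENNReal.ofReal_le_ofReal_iff (by positivity), ENNReal.ofReal_mul C.coe_nonneg,
      ENNReal.ofReal_add hH hE, ofReal_integral_integral_eq_nonlocalEnergy hk hk₀ hkM hv,
      ofReal_integral_eq_lintegral_ofReal hwv hwv₀,
      ofReal_integral_eq_lintegral_ofReal hv.integrable_sq (ae_of_all _ fun _ => sq_nonneg _),
      ENNReal.ofReal_coe_nnreal, add_comm]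
    simpa using hC v hv.1.aemeasurable
  exact hbound.trans (by gcongr; linarith)

end SqIntegralControlledBy

end NonlocalEnergy

theorem MeasureTheory.AEStronglyMeasurable.comp_sub_prod_restrict {G β : Type*} [AddGroup G]
    [MeasurableSpace G] [MeasurableAdd₂ G] [MeasurableNeg G] [TopologicalSpace β] {ν : Measure G}
    [SFinite ν] [ν.IsAddRightInvariant] {J : G → β} (hJ : AEStronglyMeasurable J ν) (s : Set G) :
    AEStronglyMeasurable (fun p : G × G => J (p.1 - p.2)) ((ν.restrict s).prod (ν.restrict s)) := by
  rw [Measure.prod_restrict]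
  exact (hJ.comp_quasiMeasurePreserving
    (quasiMeasurePreserving_sub_of_right_invariant ν ν)).restrict

section DeltaConnected

variable {N : ℕ}

theorem DeltaConnected.forall_mem_of_subset_biUnion_ball {δ r : ℝ}
    {D : Set (EuclideanSpace ℝ (Fin N))} (hD : DeltaConnected δ D) (hDo : IsOpen D)
    (hδ : 0 < δ) (hr : 0 < r) {t : Set (EuclideanSpace ℝ (Fin N))} (htD : t ⊆ D)
    (hcov : D ⊆ ⋃ z ∈ t, ball z r) {P : EuclideanSpace ℝ (Fin N) → Prop}
    {a : EuclideanSpace ℝ (Fin N)} (ha : a ∈ t) (hPa : P a)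
    (hstep : ∀ z ∈ t, ∀ w ∈ t, dist z w ≤ δ + 2 * r → P z → P w) : ∀ b ∈ t, P b := by
  by_contra! hbad
  obtain ⟨b, hb, hPb⟩ := hbad
  set G := ⋃ z ∈ {z ∈ t | P z}, ball z r
  set G' := ⋃ w ∈ {w ∈ t | ¬ P w}, ball w r
  have hsep : ∀ x ∈ G, ∀ y ∈ G', δ ≤ dist x y := by
    simp only [G, G', mem_iUnion₂]
    rintro x ⟨z, ⟨hz, hPz⟩, hx⟩ y ⟨w, ⟨hw, hPw⟩, hy⟩
    by_contra! hxy
    refine hPw (hstep z hz w hw ?_ hPz)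
    rw [mem_ball'] at hx
    rw [mem_ball] at hy
    linarith [dist_triangle4 z x y w]
  refine hD ⟨D ∩ G, D ∩ G', hDo.inter (isOpen_biUnion fun _ _ => isOpen_ball),
    hDo.inter (isOpen_biUnion fun _ _ => isOpen_ball),
    ⟨a, htD ha, mem_biUnion ⟨ha, hPa⟩ (mem_ball_self hr)⟩,
    ⟨b, htD hb, mem_biUnion ⟨hb, hPb⟩ (mem_ball_self hr)⟩, ?_, ?_,
    fun x hx y hy => hsep x hx.2 y hy.2⟩
  · rw [← inter_union_distrib_left, inter_eq_left]
    intro x hx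
    obtain ⟨z, hz, hxz⟩ := mem_iUnion₂.1 (hcov hx)
    by_cases hPz : P z
    exacts [Or.inl (mem_biUnion ⟨hz, hPz⟩ hxz), Or.inr (mem_biUnion ⟨hz, hPz⟩ hxz)]
  · refine eq_empty_of_forall_notMem fun x hx => ?_
    have := hsep x hx.1.2 x hx.2.2
    rw [dist_self] at this
    linarith

theorem SqIntegralControlledBy.of_deltaConnected {μ : Measure (EuclideanSpace ℝ (Fin N))}
    [IsFiniteMeasure μ] {k : EuclideanSpace ℝ (Fin N) → EuclideanSpace ℝ (Fin N) → ℝ≥0∞}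
    {Φ : (EuclideanSpace ℝ (Fin N) → ℝ) → ℝ≥0∞} (hE : ∀ v, nonlocalEnergy μ k v ≤ Φ v)
    {δ : ℝ} (hδ : 0 < δ) {c : ℝ≥0} (hc : c ≠ 0) (hk : ∀ x y, dist x y ≤ 2 * δ → c ≤ k x y)
    {Ω : Set (EuclideanSpace ℝ (Fin N))} (hΩo : IsOpen Ω) (hΩb : Bornology.IsBounded Ω)
    (hΩc : DeltaConnected δ Ω) (hμΩ : ∀ x ∈ Ω, ∀ r > 0, μ (ball x r) ≠ 0)
    {T : Set (EuclideanSpace ℝ (Fin N))} (hTm : MeasurableSet T) (hTΩ : T ⊆ Ω) (hT₀ : μ T ≠ 0)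
    (hT : SqIntegralControlledBy μ Φ T) : SqIntegralControlledBy μ Φ Ω := by
  have hr : 0 < δ / 4 := by positivity
  obtain ⟨t, htΩ, htfin, hcov⟩ :=
    finite_approx_of_totallyBounded (hΩb.isCompact_closure.totallyBounded.subset subset_closure)
      (δ / 4) hr
  have hnear : ∀ z w, dist z w ≤ δ + 2 * (δ / 4) →
      ∀ x ∈ ball w (δ / 4), ∀ y ∈ ball z (δ / 4), c ≤ k x y := by
    intro z w hzw x hx y hy
    rw [mem_ball] at hx hy
    exact hk x y (by linarith [dist_triangle4 x w z y, dist_comm w z, dist_comm z y])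
  obtain ⟨z₀, hz₀, hTz₀⟩ : ∃ z ∈ t, μ (T ∩ ball z (δ / 4)) ≠ 0 := by
    by_contra! h
    refine hT₀ (measure_mono_null (fun x hx => ?_) ((measure_biUnion_null_iff htfin.countable).2 h))
    obtain ⟨z, hz, hxz⟩ := mem_iUnion₂.1 (hcov (hTΩ hx))
    exact mem_biUnion hz ⟨hx, hxz⟩
  have hbase : SqIntegralControlledBy μ Φ (ball z₀ (δ / 4)) :=
    (hT.mono inter_subset_left.eventuallyLE).of_kernel_ge hE measurableSet_ball
      (hTm.inter measurableSet_ball) hTz₀ hc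
      fun x hx y hy => hnear z₀ z₀ (by rw [dist_self]; positivity) x hx y hy.2
  have hballs : ∀ z ∈ t, SqIntegralControlledBy μ Φ (ball z (δ / 4)) :=
    hΩc.forall_mem_of_subset_biUnion_ball hΩo hδ hr htΩ hcov hz₀ hbase
      fun z hz w _ hzw hPz => hPz.of_kernel_ge hE measurableSet_ball measurableSet_ball
        (hμΩ z (htΩ hz) _ hr) hc (hnear z w hzw)
  exact (biUnion htfin hballs).mono hcov.eventuallyLE

end DeltaConnected

theorem nonlocal_poincare_with_weight_general {N : ℕ} (δ : ℝ) (hδ : 0 < δ)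
    (Ωnl : Set (EuclideanSpace ℝ (Fin N)))
    (hΩnl_open : IsOpen Ωnl) (hΩnl_bdd : Bornology.IsBounded Ωnl)
    (hΩnl_conn : DeltaConnected δ Ωnl)
    (J : EuclideanSpace ℝ (Fin N) → ℝ)
    (hJ_nonneg : ∀ z, 0 ≤ J z)
    (hJ_bdd : ∃ M : ℝ, ∀ z, J z ≤ M)
    (hJ_int : Integrable J)
    (hJ1 : ∃ c > (0 : ℝ), ∀ z, ‖z‖ ≤ 2 * δ → c ≤ J z)
    (h : EuclideanSpace ℝ (Fin N) → ℝ)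
    (hh_cont : Continuous h)
    (hh_nonneg : ∀ x ∈ Ωnl, 0 ≤ h x)
    (B : Set (EuclideanSpace ℝ (Fin N)))
    (hB_sub : B ⊆ Ωnl) (hB_meas : MeasurableSet B) (hB_pos : 0 < volume B)
    (hh_pos : ∀ x ∈ B, 0 < h x) :
    ∃ C > (0 : ℝ), ∀ v : EuclideanSpace ℝ (Fin N) → ℝ,
      MemLp v 2 (volume.restrict Ωnl) →
      ∫ x in Ωnl, (v x) ^ 2 ≤
        C * ((∫ x in Ωnl, h x * (v x) ^ 2) +
          ∫ x in Ωnl, ∫ y in Ωnl, J (x - y) * (v y - v x) ^ 2) := by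
  obtain ⟨c, hc, hJc⟩ := hJ1
  obtain ⟨M, hJM⟩ := hJ_bdd
  obtain ⟨L, hL⟩ := hΩnl_bdd.isCompact_closure.exists_bound_of_continuousOn hh_cont.continuousOn
  set μ := volume.restrict Ωnl
  have : IsFiniteMeasure μ := isFiniteMeasure_restrict.2 hΩnl_bdd.measure_lt_top.ne
  have hΩ_ae : ∀ᵐ x ∂μ, x ∈ Ωnl := ae_restrict_mem hΩnl_open.measurableSet
  obtain ⟨ε, hε, hBε⟩ := exists_pos_measure_inter_setOf_le (μ := μ)
    (by rw [Measure.restrict_eq_self _ hB_sub]; exact hB_pos.ne') hh_pos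
  have hT : MeasurableSet (B ∩ {x | ε ≤ h x}) :=
    hB_meas.inter (measurableSet_le measurable_const hh_cont.measurable)
  have hΩ : SqIntegralControlledBy μ
      (fun v => nonlocalEnergy μ (fun x y => ENNReal.ofReal (J (x - y))) v
        + ∫⁻ x, ENNReal.ofReal (h x * v x ^ 2) ∂μ) Ωnl :=
    .of_deltaConnected (fun _ => le_self_add) hδ (c := c.toNNReal) (by simpa using hc)
      (fun x y hxy => ENNReal.ofReal_le_ofReal (hJc _ (by rwa [← dist_eq_norm])))
      hΩnl_open hΩnl_bdd hΩnl_conn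
      (fun x hx r hr => by
        rw [Measure.restrict_apply measurableSet_ball]
        exact (isOpen_ball.inter hΩnl_open).measure_ne_zero _ ⟨x, mem_ball_self hr, hx⟩)
      hT (inter_subset_left.trans hB_sub) hBε
      (.of_le_weight (fun _ => le_add_self) hT hε fun x hx => hx.2)
  exact (hΩ.mono (hΩ_ae.mono fun x hx _ => hx)).exists_integral_sq_le
    (hJ_int.aestronglyMeasurable.comp_sub_prod_restrict Ωnl)
    (fun _ _ => hJ_nonneg _) (fun _ _ => hJM _) hh_cont.aestronglyMeasurable
    (hΩ_ae.mono hh_nonneg) (hΩ_ae.mono fun x hx => hL x (subset_closure hx))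

/-- Nonlocal Poincaré-type inequality with a zeroth order weight `h` which is positive on a
set of positive measure. -/
theorem nonlocal_poincare_with_weight {N : ℕ} (δ : ℝ) (hδ : 0 < δ)
    (Ωnl : Set (EuclideanSpace ℝ (Fin N)))
    (hΩnl_open : IsOpen Ωnl) (hΩnl_bdd : Bornology.IsBounded Ωnl)
    (hΩnl_conn : DeltaConnected δ Ωnl)
    (J : EuclideanSpace ℝ (Fin N) → ℝ)
    (hJ_nonneg : ∀ z, 0 ≤ J z)
    (hJ_symm : ∀ z, J (-z) = J z)
    (hJ_bdd : ∃ M : ℝ, ∀ z, J z ≤ M)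
    (hJ_int : Integrable J)
    (hJ1 : ∃ c > (0 : ℝ), ∀ z, ‖z‖ ≤ 2 * δ → c ≤ J z)
    (hJ2 : ∃ K : Lp ℝ 2 (volume.restrict Ωnl) →L[ℝ] Lp ℝ 2 (volume.restrict Ωnl),
      IsCompactOperator K ∧ ∀ w : Lp ℝ 2 (volume.restrict Ωnl),
        ∀ᵐ x ∂(volume.restrict Ωnl), K w x = ∫ y in Ωnl, J (x - y) * w y)
    (h : EuclideanSpace ℝ (Fin N) → ℝ)
    (hh_cont : Continuous h)
    (hh_nonneg : ∀ x ∈ Ωnl, 0 ≤ h x)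
    (B : Set (EuclideanSpace ℝ (Fin N)))
    (hB_sub : B ⊆ Ωnl) (hB_meas : MeasurableSet B) (hB_pos : 0 < volume B)
    (hh_pos : ∀ x ∈ B, 0 < h x) :
    ∃ C > (0 : ℝ), ∀ v : EuclideanSpace ℝ (Fin N) → ℝ,
      MemLp v 2 (volume.restrict Ωnl) →
      ∫ x in Ωnl, (v x) ^ 2 ≤
        C * ((∫ x in Ωnl, h x * (v x) ^ 2) +
          ∫ x in Ωnl, ∫ y in Ωnl, J (x - y) * (v y - v x) ^ 2) :=
  nonlocal_poincare_with_weight_general δ hδ Ωnl hΩnl_open hΩnl_bdd hΩnl_conn J hJ_nonneg hJ_bdd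
    hJ_int hJ1 h hh_cont hh_nonneg B hB_sub hB_meas hB_pos hh_pos
end

section
/- Let Ω_ℓ and Ω_{nℓ} be disjoint open bounded subsets of ℝ^N with Ω_{nℓ} δ-connected and dist(Ω_ℓ, Ω_{nℓ}) < δ (condition (P1)), and let J satisfy (J1) and (J2). Define L_{nℓ} : L²(Ω_ℓ) → L²(Ω_{nℓ}) by sending u to the unique solution v of the nonlocal problem with data (0, u). Then L_{nℓ} is additive and homogeneous (linear), and there is a constant C > 0 with ‖L_{nℓ}(u)‖_{L²(Ω_{nℓ})} ≤ C ‖u‖_{L²(Ω_ℓ)} for all u ∈ L²(Ω_ℓ); in particular L_{nℓ} is a bounded linear operator. -/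
/-!
Write `b(x) = ∫_{Ωnlᶜ} J(x - y) dy`, `j(x) = ∫_{Ωnl} J(x - y) dy`, so that the equation reads
`(b + 2j) v = ∫_{Ωl} J(· - y) u(y) dy + 2 ∫_{Ωnl} J(· - y) v(y) dy`. This relation is linear in
`(u, v)`, and closed in `L²(Ωl) × L²(Ωnl)`: for fixed `x`, `f ↦ ∫_S J(x - y) f(y) dy` is the inner
product with `J(x - ·) ∈ L²(S)`, and an `L²`-convergent sequence converges a.e. along a subsequence.
So the solution operator is linear and, by the closed graph theorem, bounded, as soon as `v = 0` is
the only solution for `u = 0`.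

For `u = 0`, multiplying by `v` and integrating gives, by symmetry of `J`,
`∫ b v² + ∬_{Ωnl × Ωnl} J(x - y) (v(x) - v(y))² = 0`. Since `J ≥ c > 0` on the `2δ`-ball, `v` is
a.e. locally constant at scale `δ`, and it vanishes where `b > 0`, which by (P1) contains a ball in
`Ωnl`. The points near which `v` is a.e. `0` and those near which it is a.e. some `t ≠ 0` then form
two open sets at distance at least `δ` covering `Ωnl`, so `δ`-connectedness forces `v = 0`.
-/

open MeasureTheory Metric Filter Set
open scoped ENNReal Topology

section GraphClosed

variable {𝕜 E F : Type*} [NontriviallyNormedField 𝕜]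
  [NormedAddCommGroup E] [NormedSpace 𝕜 E] [CompleteSpace E]
  [NormedAddCommGroup F] [NormedSpace 𝕜 F] [CompleteSpace F]

theorem exists_continuousLinearMap_of_graph_subset (S : Submodule 𝕜 (E × F))
    (hS : IsClosed (S : Set (E × F))) (hS₀ : ∀ w, ((0 : E), w) ∈ S → w = 0) (f : E → F)
    (hf : ∀ u, (u, f u) ∈ S) : ∃ g : E →L[𝕜] F, ⇑g = f := by
  have eq_of_mem : ∀ u w, (u, w) ∈ S → w = f u := fun u w h =>
    sub_eq_zero.mp (hS₀ _ (by simpa using S.sub_mem h (hf u)))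
  let g : E →ₗ[𝕜] F :=
    { toFun := f
      map_add' := fun u₁ u₂ => (eq_of_mem _ _ (S.add_mem (hf u₁) (hf u₂))).symm
      map_smul' := fun c u => (eq_of_mem _ _ (S.smul_mem c (hf u))).symm }
  have hgraph : (g.graph : Set (E × F)) = S := by
    ext ⟨u, w⟩
    refine ⟨fun h => ?_, eq_of_mem u w⟩
    rw [SetLike.mem_coe, LinearMap.mem_graph_iff] at h
    rw [show w = f u from h]
    exact hf u
  exact ⟨⟨g, g.continuous_of_isClosed_graph (hgraph ▸ hS)⟩, rfl⟩

end GraphClosed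

section AeLocallyConstant

variable {X : Type*} [PseudoMetricSpace X] [MeasurableSpace X] {μ : Measure X}
  {f : X → ℝ} {U : Set X} {δ : ℝ}

def IsAeConstNear (μ : Measure X) (f : X → ℝ) (t : ℝ) (x : X) : Prop :=
  ∃ ρ > 0, ∀ᵐ y ∂μ, y ∈ ball x ρ → f y = t

theorem isOpen_setOf_isAeConstNear (t : ℝ) : IsOpen {x | IsAeConstNear μ f t x} := by
  refine Metric.isOpen_iff.mpr fun x ⟨ρ, hρ, hx⟩ => ⟨ρ / 2, half_pos hρ, fun x' hx' => ?_⟩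
  refine ⟨ρ / 2, half_pos hρ, hx.mono fun y hy hyx' => hy ?_⟩
  rw [mem_ball] at hx' hyx' ⊢
  linarith [dist_triangle y x' x]

theorem ae_restrict_eq_zero_of_forall_isAeConstNear [SecondCountableTopology X]
    (hU : MeasurableSet U) (h : ∀ x ∈ U, IsAeConstNear (μ.restrict U) f 0 x) :
    ∀ᵐ x ∂μ.restrict U, f x = 0 := by
  rw [ae_restrict_iff' hU, ae_iff]
  refine measure_null_of_locally_null _ fun x hx => ?_
  obtain ⟨ρ, hρ, hx0⟩ := h x (Classical.not_imp.mp hx).1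
  refine ⟨_, inter_mem_nhdsWithin _ (ball_mem_nhds x hρ), ?_⟩
  rw [ae_restrict_iff' hU, ae_iff] at hx0
  exact measure_mono_null (fun y ⟨hy, hyx⟩ => fun h => hy fun hyU => h hyU hyx) hx0

variable [OpensMeasurableSpace X] [μ.IsOpenPosMeasure]

theorem exists_mem_ball_of_ae_restrict (hU : IsOpen U) {x : X} (hx : x ∈ U) {r : ℝ} (hr : 0 < r)
    {p : X → Prop} (hp : ∀ᵐ y ∂μ.restrict U, p y) : ∃ y ∈ ball x r, p y := by
  have hpos : μ.restrict U (ball x r) ≠ 0 := by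
    rw [Measure.restrict_apply measurableSet_ball]
    exact ((isOpen_ball.inter hU).measure_pos μ ⟨x, mem_ball_self hr, hx⟩).ne'
  exact Measure.exists_mem_of_measure_ne_zero_of_ae hpos (ae_restrict_of_ae hp)

theorem exists_isAeConstNear (hU : IsOpen U)
    (hf : ∀ᵐ x ∂μ.restrict U, ∀ᵐ y ∂μ.restrict U, dist x y < δ → f y = f x)
    (hδ : 0 < δ) {x : X} (hx : x ∈ U) :
    ∃ t, IsAeConstNear (μ.restrict U) f t x := by
  obtain ⟨p, hp, hfp⟩ := exists_mem_ball_of_ae_restrict hU hx (half_pos hδ) hf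
  refine ⟨f p, δ / 2, half_pos hδ, hfp.mono fun y hy hyx => hy ?_⟩
  rw [mem_ball] at hp hyx
  linarith [dist_triangle p x y, dist_comm x y]

theorem IsAeConstNear.eq_of_dist_lt (hU : IsOpen U)
    (hf : ∀ᵐ x ∂μ.restrict U, ∀ᵐ y ∂μ.restrict U, dist x y < δ → f y = f x)
    {x x' : X} {s t : ℝ} (hx : x ∈ U) (hx' : x' ∈ U)
    (hs : IsAeConstNear (μ.restrict U) f s x) (ht : IsAeConstNear (μ.restrict U) f t x')
    (hxx' : dist x x' < δ) : s = t := by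
  obtain ⟨ρ, hρ, hs⟩ := hs
  obtain ⟨ρ', hρ', ht⟩ := ht
  set σ := (δ - dist x x') / 2 with hσ_def
  have hσ : 0 < σ := by linarith
  obtain ⟨p, hp, hfp, hps⟩ :=
    exists_mem_ball_of_ae_restrict hU hx (lt_min hρ hσ) (hf.and hs)
  obtain ⟨y, hy, hyp, hyt⟩ :=
    exists_mem_ball_of_ae_restrict hU hx' (lt_min hρ' hσ) (hfp.and ht)
  rw [mem_ball, lt_min_iff] at hp hy
  have hpy : dist p y < δ := by
    linarith [dist_triangle4 p x x' y, dist_comm x' y, hp.2, hy.2]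
  rw [← hps (mem_ball.mpr hp.1), ← hyp hpy, hyt (mem_ball.mpr hy.1)]

end AeLocallyConstant

theorem DeltaConnected.ae_eq_zero {N : ℕ} {δ : ℝ} {U : Set (EuclideanSpace ℝ (Fin N))}
    (hconn : DeltaConnected δ U) (hδ : 0 < δ) (hU : IsOpen U)
    {μ : Measure (EuclideanSpace ℝ (Fin N))} [μ.IsOpenPosMeasure] {f : EuclideanSpace ℝ (Fin N) → ℝ}
    (hf : ∀ᵐ x ∂μ.restrict U, ∀ᵐ y ∂μ.restrict U, dist x y < δ → f y = f x)
    {x₀ : EuclideanSpace ℝ (Fin N)} (hx₀ : x₀ ∈ U) (h₀ : IsAeConstNear (μ.restrict U) f 0 x₀) :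
    ∀ᵐ x ∂μ.restrict U, f x = 0 := by
  refine ae_restrict_eq_zero_of_forall_isAeConstNear hU.measurableSet fun x₁ hx₁ => ?_
  by_contra hx₁0
  obtain ⟨t₁, ht₁⟩ := exists_isAeConstNear hU hf hδ hx₁
  have ht₁0 : t₁ ≠ 0 := by rintro rfl; exact hx₁0 ht₁
  have hsep : ∀ x ∈ U, ∀ y ∈ U, ∀ t ≠ 0, IsAeConstNear (μ.restrict U) f 0 x →
      IsAeConstNear (μ.restrict U) f t y → δ ≤ dist x y := fun x hx y hy t ht hx0 hyt =>
    le_of_not_gt fun hxy => ht (hx0.eq_of_dist_lt hU hf hx hy hyt hxy).symm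
  refine hconn ⟨U ∩ {x | IsAeConstNear (μ.restrict U) f 0 x},
    U ∩ ⋃ (t) (_ : t ≠ 0), {x | IsAeConstNear (μ.restrict U) f t x},
    hU.inter (isOpen_setOf_isAeConstNear 0),
    hU.inter (isOpen_iUnion fun t => isOpen_iUnion fun _ => isOpen_setOf_isAeConstNear t),
    ⟨x₀, hx₀, h₀⟩, ⟨x₁, hx₁, mem_iUnion₂.mpr ⟨t₁, ht₁0, ht₁⟩⟩, ?_, ?_, ?_⟩
  · refine Subset.antisymm (union_subset inter_subset_left inter_subset_left) fun x hx => ?_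
    obtain ⟨t, ht⟩ := exists_isAeConstNear hU hf hδ hx
    by_cases ht0 : t = 0
    · exact Or.inl ⟨hx, ht0 ▸ ht⟩
    · exact Or.inr ⟨hx, mem_iUnion₂.mpr ⟨t, ht0, ht⟩⟩
  · refine eq_empty_of_forall_notMem fun x ⟨⟨hx, hx0⟩, _, hxt⟩ => ?_
    obtain ⟨t, ht, hxt⟩ := mem_iUnion₂.mp hxt
    exact (hsep x hx x hx t ht hx0 hxt).not_gt (by simpa using hδ)
  · rintro x ⟨hx, hx0⟩ y ⟨hy, hyt⟩
    obtain ⟨t, ht, hyt⟩ := mem_iUnion₂.mp hyt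
    exact hsep x hx y hy t ht hx0 hyt

section SymmetricKernel

variable {X : Type*} [MeasurableSpace X] {ν : Measure X} [IsFiniteMeasure ν] {k : X → X → ℝ}
  {M : ℝ} {w : X → ℝ}

theorem integrable_kernel_mul_sq_sub_mul
    (hk : AEStronglyMeasurable (fun p : X × X => k p.1 p.2) (ν.prod ν)) (hkb : ∀ x y, ‖k x y‖ ≤ M)
    (hw : MemLp w 2 ν) :
    Integrable (fun p : X × X => k p.1 p.2 * (w p.1 ^ 2 - w p.1 * w p.2)) (ν.prod ν) := by
  have hw₁ : Integrable w ν := hw.integrable one_le_two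
  have hsq := hw.integrable_sq.mul_prod (integrable_const (1 : ℝ) (μ := ν))
  refine ((hsq.sub (hw₁.mul_prod hw₁)).bdd_mul hk (ae_of_all _ fun p => hkb p.1 p.2)).congr
    (ae_of_all _ fun p => ?_)
  simp only [Pi.sub_apply, mul_one]

theorem integrable_kernel_mul_sub_sq
    (hk : AEStronglyMeasurable (fun p : X × X => k p.1 p.2) (ν.prod ν)) (hkb : ∀ x y, ‖k x y‖ ≤ M)
    (hw : MemLp w 2 ν) :
    Integrable (fun p : X × X => k p.1 p.2 * (w p.1 - w p.2) ^ 2) (ν.prod ν) :=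
  (((hw.comp_fst ν).sub (hw.comp_snd ν)).integrable_sq.bdd_mul hk
    (ae_of_all _ fun p => hkb p.1 p.2))

theorem integral_kernel_mul_sub_sq
    (hk : AEStronglyMeasurable (fun p : X × X => k p.1 p.2) (ν.prod ν)) (hkb : ∀ x y, ‖k x y‖ ≤ M)
    (hsymm : ∀ x y, k x y = k y x) (hw : MemLp w 2 ν) :
    ∫ p, k p.1 p.2 * (w p.1 - w p.2) ^ 2 ∂ν.prod ν
      = 2 * ∫ x, ((∫ y, k x y ∂ν) * w x ^ 2 - (∫ y, k x y * w y ∂ν) * w x) ∂ν := by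
  set g : X × X → ℝ := fun p => k p.1 p.2 * (w p.1 ^ 2 - w p.1 * w p.2)
  have hg : Integrable g (ν.prod ν) := integrable_kernel_mul_sq_sub_mul hk hkb hw
  calc ∫ p, k p.1 p.2 * (w p.1 - w p.2) ^ 2 ∂ν.prod ν
      = ∫ p, (g p + g p.swap) ∂ν.prod ν := by
        refine integral_congr_ae (ae_of_all _ fun p => ?_)
        simp only [g, Prod.fst_swap, Prod.snd_swap, hsymm p.2 p.1]
        ring
    _ = 2 * ∫ p, g p ∂ν.prod ν := by
        have hg_swap : Integrable (fun p : X × X => g p.swap) (ν.prod ν) := hg.swap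
        rw [integral_add hg hg_swap, integral_prod_swap g]
        ring
    _ = 2 * ∫ x, ((∫ y, k x y ∂ν) * w x ^ 2 - (∫ y, k x y * w y ∂ν) * w x) ∂ν := by
        rw [integral_prod g hg]
        congr 1
        refine integral_congr_ae ?_
        filter_upwards [hk.prodMk_left] with x hkx
        have hkx_int : Integrable (k x) ν := .of_bound hkx M (ae_of_all _ (hkb x))
        rw [← integral_mul_const, ← integral_mul_const,
          ← integral_sub (hkx_int.mul_const _) ((hw.integrable one_le_two).bdd_mul hkx
            (ae_of_all _ (hkb x)) |>.mul_const _)]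
        congr 1 with y
        ring

end SymmetricKernel

section Kernel

variable {G : Type*} [NormedAddCommGroup G] [MeasurableSpace G]

noncomputable def kernelIntegral (μ : Measure G) (J : G → ℝ) (S : Set G) (f : G → ℝ) (x : G) : ℝ :=
  ∫ y in S, J (x - y) * f y ∂μ

theorem kernelIntegral_indicator {μ : Measure G} {J : G → ℝ} {S T : Set G} (hT : MeasurableSet T)
    (hTS : T ⊆ S) (g : G → ℝ) (x : G) :
    kernelIntegral μ J S (T.indicator g) x = kernelIntegral μ J T g x := by
  have hmul : (fun y => J (x - y) * T.indicator g y) = T.indicator fun y => J (x - y) * g y :=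
    funext fun y => (indicator_mul_right T (fun y => J (x - y)) g).symm
  rw [kernelIntegral, kernelIntegral, hmul, setIntegral_indicator hT,
    inter_eq_self_of_subset_right hTS]

variable [MeasurableAdd₂ G] [MeasurableNeg G] {μ : Measure G} [μ.IsAddLeftInvariant]
  {J : G → ℝ} {M : ℝ} {S : Set G}

theorem MeasureTheory.AEStronglyMeasurable.comp_sub_left [μ.IsNegInvariant]
    (hJ : AEStronglyMeasurable J μ) (x : G) :
    AEStronglyMeasurable (fun y => J (x - y)) μ :=
  hJ.comp_measurePreserving (Measure.measurePreserving_sub_left μ x)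

theorem MeasureTheory.AEStronglyMeasurable.comp_sub_restrict_prod [SFinite μ]
    (hJ : AEStronglyMeasurable J μ) (s t : Set G) :
    AEStronglyMeasurable (fun p : G × G => J (p.1 - p.2)) ((μ.restrict s).prod (μ.restrict t)) :=
  (hJ.comp_quasiMeasurePreserving (quasiMeasurePreserving_sub μ μ)).mono_ac
    ((Measure.absolutelyContinuous_of_le Measure.restrict_le_self).prod
      (Measure.absolutelyContinuous_of_le Measure.restrict_le_self))

theorem aestronglyMeasurable_kernelIntegral [SFinite μ] (hJ : AEStronglyMeasurable J μ) {f : G → ℝ}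
    (hf : AEStronglyMeasurable f (μ.restrict S)) (T : Set G) :
    AEStronglyMeasurable (kernelIntegral μ J S f) (μ.restrict T) :=
  ((hJ.comp_sub_restrict_prod T S).mul hf.comp_snd).integral_prod_right'

theorem integrableOn_kernel_mul [μ.IsNegInvariant] (hJ : AEStronglyMeasurable J μ)
    (hJb : ∀ z, ‖J z‖ ≤ M) {f : G → ℝ} (hf : IntegrableOn f S μ) (x : G) :
    IntegrableOn (fun y => J (x - y) * f y) S μ :=
  hf.bdd_mul (hJ.comp_sub_left x).restrict (ae_of_all _ fun y => hJb (x - y))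

theorem norm_kernelIntegral_one_le [μ.IsNegInvariant] (hJ : Integrable J μ) (x : G) :
    ‖kernelIntegral μ J S 1 x‖ ≤ ∫ z, ‖J z‖ ∂μ := by
  simp only [kernelIntegral, Pi.one_apply, mul_one]
  calc ‖∫ y in S, J (x - y) ∂μ‖ ≤ ∫ y in S, ‖J (x - y)‖ ∂μ := norm_integral_le_integral_norm _
    _ ≤ ∫ y, ‖J (x - y)‖ ∂μ :=
        setIntegral_le_integral (hJ.comp_sub_left x).norm (ae_of_all _ fun _ => norm_nonneg _)
    _ = ∫ z, ‖J z‖ ∂μ := integral_sub_left_eq_self (fun z => ‖J z‖) μ x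

theorem exists_clm_eq_kernelIntegral [μ.IsNegInvariant] [IsFiniteMeasure (μ.restrict S)]
    (hJ : AEStronglyMeasurable J μ) (hJb : ∀ z, ‖J z‖ ≤ M) (x : G) :
    ∃ φ : Lp ℝ 2 (μ.restrict S) →L[ℝ] ℝ, ∀ f, φ f = kernelIntegral μ J S f x := by
  have hk : MemLp (fun y => J (x - y)) 2 (μ.restrict S) :=
    .of_bound (hJ.comp_sub_left x).restrict M (ae_of_all _ fun y => hJb (x - y))
  refine ⟨innerSL ℝ (hk.toLp _), fun f => ?_⟩
  rw [innerSL_apply_apply, L2.inner_def]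
  refine integral_congr_ae ?_
  filter_upwards [hk.coeFn_toLp] with y hy
  rw [hy, Real.inner_apply]

section LpKernel

variable [μ.IsNegInvariant] [IsFiniteMeasure (μ.restrict S)]

theorem kernelIntegral_add (hJ : AEStronglyMeasurable J μ) (hJb : ∀ z, ‖J z‖ ≤ M)
    (f g : Lp ℝ 2 (μ.restrict S)) (x : G) :
    kernelIntegral μ J S ⇑(f + g) x = kernelIntegral μ J S f x + kernelIntegral μ J S g x := by
  obtain ⟨φ, hφ⟩ := exists_clm_eq_kernelIntegral (S := S) hJ hJb x
  simp only [← hφ, map_add]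

theorem kernelIntegral_smul (hJ : AEStronglyMeasurable J μ) (hJb : ∀ z, ‖J z‖ ≤ M) (c : ℝ)
    (f : Lp ℝ 2 (μ.restrict S)) (x : G) :
    kernelIntegral μ J S ⇑(c • f) x = c * kernelIntegral μ J S f x := by
  obtain ⟨φ, hφ⟩ := exists_clm_eq_kernelIntegral (S := S) hJ hJb x
  simp only [← hφ, map_smul, smul_eq_mul]

theorem kernelIntegral_zero (hJ : AEStronglyMeasurable J μ) (hJb : ∀ z, ‖J z‖ ≤ M) (x : G) :
    kernelIntegral μ J S ⇑(0 : Lp ℝ 2 (μ.restrict S)) x = 0 := by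
  obtain ⟨φ, hφ⟩ := exists_clm_eq_kernelIntegral (S := S) hJ hJb x
  simp only [← hφ, map_zero]

theorem continuous_kernelIntegral (hJ : AEStronglyMeasurable J μ) (hJb : ∀ z, ‖J z‖ ≤ M) (x : G) :
    Continuous fun f : Lp ℝ 2 (μ.restrict S) => kernelIntegral μ J S f x := by
  obtain ⟨φ, hφ⟩ := exists_clm_eq_kernelIntegral (S := S) hJ hJb x
  simpa only [← hφ] using φ.continuous

end LpKernel

theorem integral_kernel_mul_sub_const [μ.IsNegInvariant] (hJ : Integrable J μ)
    (hJb : ∀ z, ‖J z‖ ≤ M) {g : G → ℝ} (hg : IntegrableOn g S μ) (a : ℝ) (x : G) :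
    ∫ y in S, J (x - y) * (g y - a) ∂μ
      = kernelIntegral μ J S g x - kernelIntegral μ J S 1 x * a := by
  simp only [kernelIntegral, Pi.one_apply, mul_one, mul_sub, ← integral_mul_const]
  exact integral_sub (integrableOn_kernel_mul hJ.1 hJb hg x)
    ((hJ.comp_sub_left x).integrableOn.mul_const a)

variable (μ J) in
/-- The nonlocal problem with data `(0, u)`, with the terms containing `v(x)` collected on the
left. -/
def IsNonlocalSolution (Ωl Ωnl : Set G) (u v : G → ℝ) : Prop :=
  ∀ᵐ x ∂μ.restrict Ωnl, (kernelIntegral μ J Ωnlᶜ 1 x + 2 * kernelIntegral μ J Ωnl 1 x) * v x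
    = kernelIntegral μ J Ωl u x + 2 * kernelIntegral μ J Ωnl v x

variable {Ωl Ωnl : Set G}

theorem IsNonlocalSolution.of_equation [μ.IsNegInvariant] (hΩl : MeasurableSet Ωl)
    (hdisj : Ωl ∩ Ωnl = ∅) (hJ : Integrable J μ) (hJb : ∀ z, ‖J z‖ ≤ M) {u v : G → ℝ}
    (hu : IntegrableOn u Ωl μ) (hv : IntegrableOn v Ωnl μ)
    (h : ∀ᵐ x ∂μ.restrict Ωnl, -(0 : ℝ) = (∫ y in Ωnlᶜ, J (x - y) * (Ωl.indicator u y - v x) ∂μ)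
      + 2 * ∫ y in Ωnl, J (x - y) * (v y - v x) ∂μ) :
    IsNonlocalSolution μ J Ωl Ωnl u v := by
  have hΩl_sub : Ωl ⊆ Ωnlᶜ := fun y hy hy' => (eq_empty_iff_forall_notMem.mp hdisj y) ⟨hy, hy'⟩
  have hū : IntegrableOn (Ωl.indicator u) Ωnlᶜ μ := (hu.integrable_indicator hΩl).integrableOn
  filter_upwards [h] with x hx
  rw [integral_kernel_mul_sub_const hJ hJb hū, integral_kernel_mul_sub_const hJ hJb hv,
    kernelIntegral_indicator hΩl hΩl_sub] at hx
  linarith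

section Submodule

variable [μ.IsNegInvariant] [IsFiniteMeasure (μ.restrict Ωl)] [IsFiniteMeasure (μ.restrict Ωnl)]

variable (Ωl Ωnl) in
def nonlocalSolutionSubmodule (hJ : AEStronglyMeasurable J μ) (hJb : ∀ z, ‖J z‖ ≤ M) :
    Submodule ℝ (Lp ℝ 2 (μ.restrict Ωl) × Lp ℝ 2 (μ.restrict Ωnl)) where
  carrier := {p | IsNonlocalSolution μ J Ωl Ωnl p.1 p.2}
  add_mem' {p q} hp hq := by
    filter_upwards [hp, hq, Lp.coeFn_add p.2 q.2] with x hpx hqx hx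
    simp only [Prod.fst_add, Prod.snd_add, kernelIntegral_add hJ hJb, hx, Pi.add_apply]
    linear_combination hpx + hqx
  zero_mem' := by
    filter_upwards [Lp.coeFn_zero ℝ 2 (μ.restrict Ωnl)] with x hx
    simp only [Prod.fst_zero, Prod.snd_zero, kernelIntegral_zero hJ hJb, hx, Pi.zero_apply]
    ring
  smul_mem' c p hp := by
    filter_upwards [hp, Lp.coeFn_smul c p.2] with x hpx hx
    simp only [Prod.smul_fst, Prod.smul_snd, kernelIntegral_smul hJ hJb, hx, Pi.smul_apply,
      smul_eq_mul]
    linear_combination c * hpx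

theorem isClosed_nonlocalSolutionSubmodule (hJ : AEStronglyMeasurable J μ) (hJb : ∀ z, ‖J z‖ ≤ M) :
    IsClosed (nonlocalSolutionSubmodule Ωl Ωnl hJ hJb :
      Set (Lp ℝ 2 (μ.restrict Ωl) × Lp ℝ 2 (μ.restrict Ωnl))) := by
  refine isSeqClosed_iff_isClosed.mp fun p q hp hpq => ?_
  obtain ⟨ns, hns, hae⟩ :=
    (tendstoInMeasure_of_tendsto_Lp ((continuous_snd.tendsto q).comp hpq)).exists_seq_tendsto_ae
  have hlim : ∀ {S : Set G} [IsFiniteMeasure (μ.restrict S)] (r : ℕ → Lp ℝ 2 (μ.restrict S)) r₀,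
      Tendsto r atTop (𝓝 r₀) → ∀ x,
        Tendsto (fun i => kernelIntegral μ J S (r (ns i)) x) atTop
          (𝓝 (kernelIntegral μ J S r₀ x)) := fun r r₀ hr x =>
    ((continuous_kernelIntegral hJ hJb x).tendsto r₀).comp (hr.comp hns.tendsto_atTop)
  filter_upwards [ae_all_iff.mpr fun n => hp (ns n), hae] with x hx hqx
  refine tendsto_nhds_unique (hqx.const_mul _) ?_
  simp only [Function.comp_apply, hx]
  exact (hlim _ _ ((continuous_fst.tendsto q).comp hpq) x).add
    ((hlim _ _ ((continuous_snd.tendsto q).comp hpq) x).const_mul 2)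

end Submodule

theorem IsNonlocalSolution.energy_ae_eq_zero [SFinite μ] [μ.IsNegInvariant]
    [IsFiniteMeasure (μ.restrict Ωnl)] (hJ : Integrable J μ) (hJb : ∀ z, ‖J z‖ ≤ M)
    (hJ0 : ∀ z, 0 ≤ J z) (hJsymm : ∀ z, J (-z) = J z) {w : G → ℝ}
    (hw₂ : MemLp w 2 (μ.restrict Ωnl)) (hw : IsNonlocalSolution μ J Ωl Ωnl 0 w) :
    (∀ᵐ x ∂μ.restrict Ωnl, kernelIntegral μ J Ωnlᶜ 1 x * w x ^ 2 = 0) ∧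
      ∀ᵐ p ∂(μ.restrict Ωnl).prod (μ.restrict Ωnl), J (p.1 - p.2) * (w p.1 - w p.2) ^ 2 = 0 := by
  have hk := hJ.1.comp_sub_restrict_prod Ωnl Ωnl
  have hkb : ∀ x y, ‖J (x - y)‖ ≤ M := fun x y => hJb (x - y)
  have hb0 : ∀ x, 0 ≤ kernelIntegral μ J Ωnlᶜ 1 x := fun x =>
    integral_nonneg fun y => mul_nonneg (hJ0 _) zero_le_one
  have hb_int : Integrable (fun x => kernelIntegral μ J Ωnlᶜ 1 x * w x ^ 2) (μ.restrict Ωnl) :=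
    hw₂.integrable_sq.bdd_mul
      (aestronglyMeasurable_kernelIntegral hJ.1 aestronglyMeasurable_const _)
      (ae_of_all _ (norm_kernelIntegral_one_le hJ))
  have hQ_int := integrable_kernel_mul_sub_sq hk hkb hw₂
  have hb_nonneg : 0 ≤ ∫ x, kernelIntegral μ J Ωnlᶜ 1 x * w x ^ 2 ∂μ.restrict Ωnl :=
    integral_nonneg fun x => mul_nonneg (hb0 x) (sq_nonneg _)
  have hQ_nonneg :
      0 ≤ ∫ p, J (p.1 - p.2) * (w p.1 - w p.2) ^ 2 ∂(μ.restrict Ωnl).prod (μ.restrict Ωnl) :=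
    integral_nonneg fun p => mul_nonneg (hJ0 _) (sq_nonneg _)
  have henergy : ∫ p, J (p.1 - p.2) * (w p.1 - w p.2) ^ 2 ∂(μ.restrict Ωnl).prod (μ.restrict Ωnl)
      = -∫ x, kernelIntegral μ J Ωnlᶜ 1 x * w x ^ 2 ∂μ.restrict Ωnl := by
    rw [integral_kernel_mul_sub_sq hk hkb (fun x y => by rw [← neg_sub, hJsymm]) hw₂,
      ← integral_neg, ← integral_const_mul]
    refine integral_congr_ae ?_
    filter_upwards [hw] with x hx
    simp only [kernelIntegral, Pi.one_apply, Pi.zero_apply, mul_one, mul_zero, integral_zero,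
      zero_add] at hx ⊢
    linear_combination w x * hx
  exact ⟨(integral_eq_zero_iff_of_nonneg (fun x => mul_nonneg (hb0 x) (sq_nonneg _)) hb_int).mp
      (by linarith),
    (integral_eq_zero_iff_of_nonneg (fun p => mul_nonneg (hJ0 _) (sq_nonneg _)) hQ_int).mp
      (by linarith)⟩

theorem exists_ball_forall_kernelIntegral_compl_pos [μ.IsNegInvariant] [OpensMeasurableSpace G]
    [ProperSpace G] [IsFiniteMeasureOnCompacts μ] [μ.IsOpenPosMeasure] {δ c : ℝ}
    (hΩl : IsOpen Ωl) (hdisj : Ωl ∩ Ωnl = ∅) (hP1 : ∃ x ∈ Ωl, ∃ y ∈ Ωnl, dist x y < δ)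
    (hJ : Integrable J μ) (hJ0 : ∀ z, 0 ≤ J z) (hc : 0 < c)
    (hJc : ∀ z, ‖z‖ ≤ 2 * δ → c ≤ J z) :
    ∃ y₀ ∈ Ωnl, ∃ ρ > 0, ∀ x ∈ ball y₀ ρ, 0 < kernelIntegral μ J Ωnlᶜ 1 x := by
  obtain ⟨x₀, hx₀, y₀, hy₀, hxy⟩ := hP1
  have hδ : 0 < δ := dist_nonneg.trans_lt hxy
  obtain ⟨r, hr, hball⟩ := Metric.isOpen_iff.mp hΩl x₀ hx₀
  set r' := min r (δ / 2) with hr'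
  have hr'_pos : 0 < r' := lt_min hr (half_pos hδ)
  have hsub : ball x₀ r' ⊆ Ωnlᶜ := fun y hy hy' =>
    (eq_empty_iff_forall_notMem.mp hdisj y) ⟨hball (ball_subset_ball (min_le_left _ _) hy), hy'⟩
  refine ⟨y₀, hy₀, δ / 2, half_pos hδ, fun x hx => ?_⟩
  have hJx : Integrable (fun y => J (x - y)) μ := hJ.comp_sub_left x
  have hJc' : ∀ y ∈ ball x₀ r', c ≤ J (x - y) := fun y hy => by
    refine hJc _ ?_
    rw [← dist_eq_norm]
    rw [mem_ball] at hx hy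
    linarith [dist_triangle4 x y₀ x₀ y, dist_comm x₀ y₀, dist_comm x₀ y, min_le_right r (δ / 2)]
  calc 0 < μ.real (ball x₀ r') • c :=
        smul_pos (ENNReal.toReal_pos (measure_ball_pos μ x₀ hr'_pos).ne' measure_ball_lt_top.ne) hc
    _ ≤ ∫ y in ball x₀ r', J (x - y) ∂μ :=
        setIntegral_ge_of_const_le measurableSet_ball measure_ball_lt_top.ne hJc' hJx.integrableOn
    _ ≤ kernelIntegral μ J Ωnlᶜ 1 x := by
        simp only [kernelIntegral, Pi.one_apply, mul_one]
        exact setIntegral_mono_set hJx.integrableOn (ae_of_all _ fun y => hJ0 _) hsub.eventuallyLE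

end Kernel

theorem eq_zero_of_mem_nonlocalSolutionSubmodule {N : ℕ} {δ M : ℝ}
    {Ωl Ωnl : Set (EuclideanSpace ℝ (Fin N))} [IsFiniteMeasure (volume.restrict Ωl)]
    [IsFiniteMeasure (volume.restrict Ωnl)] (hΩl : IsOpen Ωl) (hΩnl : IsOpen Ωnl)
    (hdisj : Ωl ∩ Ωnl = ∅) (hconn : DeltaConnected δ Ωnl)
    (hP1 : ∃ x ∈ Ωl, ∃ y ∈ Ωnl, dist x y < δ) {J : EuclideanSpace ℝ (Fin N) → ℝ}
    (hJ : Integrable J volume) (hJb : ∀ z, ‖J z‖ ≤ M) (hJ0 : ∀ z, 0 ≤ J z)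
    (hJsymm : ∀ z, J (-z) = J z) {c : ℝ} (hc : 0 < c) (hJc : ∀ z, ‖z‖ ≤ 2 * δ → c ≤ J z)
    {w : Lp ℝ 2 (volume.restrict Ωnl)}
    (hw : (0, w) ∈ nonlocalSolutionSubmodule Ωl Ωnl hJ.aestronglyMeasurable hJb) :
    w = 0 := by
  have hw₀ : IsNonlocalSolution volume J Ωl Ωnl 0 w := by
    filter_upwards [hw] with x hx
    rw [kernelIntegral_zero hJ.aestronglyMeasurable hJb] at hx
    simpa [kernelIntegral] using hx
  obtain ⟨hbw, hQ⟩ := hw₀.energy_ae_eq_zero hJ hJb hJ0 hJsymm (Lp.memLp w)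
  have hδ : 0 < δ := by
    obtain ⟨x, -, y, -, hxy⟩ := hP1
    exact dist_nonneg.trans_lt hxy
  have hloc : ∀ᵐ x ∂volume.restrict Ωnl, ∀ᵐ y ∂volume.restrict Ωnl, dist x y < δ → w y = w x := by
    refine Measure.ae_ae_of_ae_prod (p := fun p => dist p.1 p.2 < δ → w p.2 = w p.1)
      (hQ.mono fun p hp hpδ => ?_)
    have hJp : 0 < J (p.1 - p.2) := hc.trans_le (hJc _ (by rw [← dist_eq_norm]; linarith))
    have := pow_eq_zero_iff (n := 2) two_ne_zero |>.mp ((mul_eq_zero.mp hp).resolve_left hJp.ne')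
    linarith
  obtain ⟨y₀, hy₀, ρ, hρ, hb⟩ :=
    exists_ball_forall_kernelIntegral_compl_pos hΩl hdisj hP1 hJ hJ0 hc hJc
  have h₀ : IsAeConstNear (volume.restrict Ωnl) w 0 y₀ :=
    ⟨ρ, hρ, hbw.mono fun x hx hxρ => pow_eq_zero_iff two_ne_zero |>.mp
      ((mul_eq_zero.mp hx).resolve_left (hb x hxρ).ne')⟩
  exact Lp.eq_zero_iff_ae_eq_zero.mpr (hconn.ae_eq_zero hδ hΩnl hloc hy₀ h₀)

theorem nonlocal_solution_operator_bounded_linear_general {N : ℕ} (δ : ℝ)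
    (Ωl Ωnl : Set (EuclideanSpace ℝ (Fin N)))
    (hΩl_open : IsOpen Ωl) (hΩl_bdd : Bornology.IsBounded Ωl)
    (hΩnl_open : IsOpen Ωnl) (hΩnl_bdd : Bornology.IsBounded Ωnl)
    (hdisj : Ωl ∩ Ωnl = ∅)
    (hΩnl_conn : DeltaConnected δ Ωnl)
    (hP1 : ∃ x ∈ Ωl, ∃ y ∈ Ωnl, dist x y < δ)
    (J : EuclideanSpace ℝ (Fin N) → ℝ)
    (hJ_nonneg : ∀ z, 0 ≤ J z)
    (hJ_symm : ∀ z, J (-z) = J z)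
    (hJ_bdd : ∃ M : ℝ, ∀ z, J z ≤ M)
    (hJ_int : Integrable J)
    (hJ1 : ∃ c > (0 : ℝ), ∀ z, ‖z‖ ≤ 2 * δ → c ≤ J z)
    (Lnl : Lp ℝ 2 (volume.restrict Ωl) → Lp ℝ 2 (volume.restrict Ωnl))
    (hLnl : ∀ u : Lp ℝ 2 (volume.restrict Ωl),
      ∀ᵐ x ∂(volume.restrict Ωnl),
        -(0 : ℝ) = (∫ y in Ωnlᶜ, J (x - y) * (Set.indicator Ωl u y - Lnl u x)) +
          2 * ∫ y in Ωnl, J (x - y) * (Lnl u y - Lnl u x)) :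
    (∀ u₁ u₂ : Lp ℝ 2 (volume.restrict Ωl), Lnl (u₁ + u₂) = Lnl u₁ + Lnl u₂) ∧
    (∀ (c : ℝ) (u : Lp ℝ 2 (volume.restrict Ωl)), Lnl (c • u) = c • Lnl u) ∧
    ∃ C > (0 : ℝ), ∀ u : Lp ℝ 2 (volume.restrict Ωl), ‖Lnl u‖ ≤ C * ‖u‖ := by
  obtain ⟨M, hM⟩ := hJ_bdd
  obtain ⟨c, hc, hJc⟩ := hJ1
  have hJb : ∀ z, ‖J z‖ ≤ M := fun z => (Real.norm_of_nonneg (hJ_nonneg z)).trans_le (hM z)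
  have : IsFiniteMeasure (volume.restrict Ωl) :=
    isFiniteMeasure_restrict.mpr hΩl_bdd.measure_lt_top.ne
  have : IsFiniteMeasure (volume.restrict Ωnl) :=
    isFiniteMeasure_restrict.mpr hΩnl_bdd.measure_lt_top.ne
  obtain ⟨L, hL⟩ := exists_continuousLinearMap_of_graph_subset
    (nonlocalSolutionSubmodule Ωl Ωnl hJ_int.aestronglyMeasurable hJb)
    (isClosed_nonlocalSolutionSubmodule _ _)
    (fun w hw => eq_zero_of_mem_nonlocalSolutionSubmodule hΩl_open hΩnl_open hdisj hΩnl_conn hP1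
      hJ_int hJb hJ_nonneg hJ_symm hc hJc hw)
    Lnl (fun u => IsNonlocalSolution.of_equation hΩl_open.measurableSet hdisj hJ_int hJb
      ((Lp.memLp u).integrable one_le_two) ((Lp.memLp _).integrable one_le_two) (hLnl u))
  subst hL
  exact ⟨map_add L, map_smul L, L.bound⟩

/-- The solution operator `L_{nℓ} : L²(Ω_ℓ) → L²(Ω_{nℓ})`, sending `u` to the unique
solution of the nonlocal problem with data `(0, u)`, is linear and bounded. -/
theorem nonlocal_solution_operator_bounded_linear {N : ℕ} (δ : ℝ) (hδ : 0 < δ)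
    (Ωl Ωnl : Set (EuclideanSpace ℝ (Fin N)))
    (hΩl_open : IsOpen Ωl) (hΩl_bdd : Bornology.IsBounded Ωl)
    (hΩnl_open : IsOpen Ωnl) (hΩnl_bdd : Bornology.IsBounded Ωnl)
    (hdisj : Ωl ∩ Ωnl = ∅)
    (hΩnl_conn : DeltaConnected δ Ωnl)
    (hP1 : ∃ x ∈ Ωl, ∃ y ∈ Ωnl, dist x y < δ)
    (J : EuclideanSpace ℝ (Fin N) → ℝ)
    (hJ_nonneg : ∀ z, 0 ≤ J z)
    (hJ_symm : ∀ z, J (-z) = J z)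
    (hJ_bdd : ∃ M : ℝ, ∀ z, J z ≤ M)
    (hJ_int : Integrable J)
    (hJ1 : ∃ c > (0 : ℝ), ∀ z, ‖z‖ ≤ 2 * δ → c ≤ J z)
    (hJ2 : ∃ K : Lp ℝ 2 (volume.restrict Ωnl) →L[ℝ] Lp ℝ 2 (volume.restrict Ωnl),
      IsCompactOperator K ∧ ∀ w : Lp ℝ 2 (volume.restrict Ωnl),
        ∀ᵐ x ∂(volume.restrict Ωnl), K w x = ∫ y in Ωnl, J (x - y) * w y)
    (Lnl : Lp ℝ 2 (volume.restrict Ωl) → Lp ℝ 2 (volume.restrict Ωnl))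
    (hLnl : ∀ u : Lp ℝ 2 (volume.restrict Ωl),
      ∀ᵐ x ∂(volume.restrict Ωnl),
        -(0 : ℝ) = (∫ y in Ωnlᶜ, J (x - y) * (Set.indicator Ωl u y - Lnl u x)) +
          2 * ∫ y in Ωnl, J (x - y) * (Lnl u y - Lnl u x)) :
    (∀ u₁ u₂ : Lp ℝ 2 (volume.restrict Ωl), Lnl (u₁ + u₂) = Lnl u₁ + Lnl u₂) ∧
    (∀ (c : ℝ) (u : Lp ℝ 2 (volume.restrict Ωl)), Lnl (c • u) = c • Lnl u) ∧
    ∃ C > (0 : ℝ), ∀ u : Lp ℝ 2 (volume.restrict Ωl), ‖Lnl u‖ ≤ C * ‖u‖ :=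
  nonlocal_solution_operator_bounded_linear_general δ Ωl Ωnl hΩl_open hΩl_bdd hΩnl_open hΩnl_bdd
    hdisj hΩnl_conn hP1 J hJ_nonneg hJ_symm hJ_bdd hJ_int hJ1 Lnl hLnl
end
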